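/- Let M be an n×n symmetric negative definite matrix with nonnegative off-diagonal entries whose associated graph (edge between i ≠ j whenever M_{ij} > 0) is connected. Then the set S = {x ∈ ℤ^n : x ≠ 0 and M·x ≤ 0 componentwise} has a unique minimal element Z_min with respect to the componentwise partial order, and Z_min has all coordinates strictly positive. -/

import Mathlib

/-!
Every `x` with `M x ≤ 0` is nonnegative: otherwise its negative part `z` would satisfy
`zᵀ M z ≥ 0`, because `M` has nonnegative off-diagonal entries and `z` is disjoint from the
positive part of `x`. A zero coordinate of such an `x` forces the coordinates of its neighbours
to vanish, so by connectedness a nonzero `x` is positive everywhere. Such vectors are closed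
under componentwise minimum, and as they are bounded below by `0` and integral, they have a
least element; a least element is the unique minimal one.
-/

open Matrix

theorem SimpleGraph.Preconnected.forall_of_adj {V : Type*} {G : SimpleGraph V}
    (hG : G.Preconnected) {p : V → Prop} (hp : ∀ u v, G.Adj u v → p u → p v) {u : V}
    (hu : p u) (v : V) : p v := by
  obtain ⟨w⟩ := hG u v
  induction w with
  | nil => exact hu
  | cons huv _ ih => exact ih (hp _ _ huv hu)

theorem InfClosed.exists_isLeast {α : Type*} [Lattice α] [LocallyFiniteOrder α] {s : Set α}
    (hs : InfClosed s) (hbdd : BddBelow s) (hne : s.Nonempty) : ∃ a, IsLeast s a := by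
  obtain ⟨b, hb⟩ := hbdd
  obtain ⟨x, hx⟩ := hne
  have hfin : (s ∩ Set.Icc b x).Finite := (Set.finite_Icc b x).inter_of_right s
  have hx' : x ∈ hfin.toFinset := by simp [hx, hb hx]
  refine ⟨hfin.toFinset.inf' ⟨x, hx'⟩ id,
    hs.finsetInf'_mem _ fun z hz => (hfin.mem_toFinset.1 hz).1, fun y hy => ?_⟩
  have hyx : y ⊓ x ∈ hfin.toFinset := by simp [hs hy hx, le_inf (hb hy) (hb hx)]
  exact (Finset.inf'_le id hyx).trans inf_le_left

namespace Matrix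

theorem dotProduct_mulVec_neg_of_posDef_neg_map_intCast {ι : Type*} [Fintype ι]
    {M : Matrix ι ι ℤ} (hM : (-(M.map (Int.cast : ℤ → ℝ))).PosDef) {z : ι → ℤ} (hz : z ≠ 0) :
    z ⬝ᵥ M *ᵥ z < 0 := by
  have hz' : (Int.cast ∘ z : ι → ℝ) ≠ 0 := fun h =>
    hz (funext fun i => Int.cast_eq_zero.1 (congrFun h i))
  have hpos := hM.dotProduct_mulVec_pos hz'
  have hcast :
      ((z ⬝ᵥ M *ᵥ z : ℤ) : ℝ) = (Int.cast ∘ z) ⬝ᵥ M.map Int.cast *ᵥ (Int.cast ∘ z) := by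
    simp only [dotProduct, mulVec, map_apply, Function.comp_apply]
    push_cast
    rfl
  rw [star_trivial, neg_mulVec, dotProduct_neg, ← hcast, neg_pos] at hpos
  exact_mod_cast hpos

variable {ι R : Type*} [Fintype ι] [CommRing R] [LinearOrder R] [IsStrictOrderedRing R]
  {M : Matrix ι ι R} {x y : ι → R}

theorem mulVec_apply_le_of_le_of_eq (hoff : ∀ i j, i ≠ j → 0 ≤ M i j) {i : ι} (hxy : x ≤ y)
    (hi : x i = y i) : (M *ᵥ x) i ≤ (M *ᵥ y) i := by
  refine Finset.sum_le_sum fun j _ => ?_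
  rcases eq_or_ne i j with rfl | hij
  · rw [hi]
  · exact mul_le_mul_of_nonneg_left (hxy j) (hoff i j hij)

theorem mulVec_inf_nonpos (hoff : ∀ i j, i ≠ j → 0 ≤ M i j)
    (hx : M *ᵥ x ≤ 0) (hy : M *ᵥ y ≤ 0) : M *ᵥ (x ⊓ y) ≤ 0 := by
  intro i
  rcases le_total (x i) (y i) with h | h
  · exact (mulVec_apply_le_of_le_of_eq hoff inf_le_left (min_eq_left h)).trans (hx i)
  · exact (mulVec_apply_le_of_le_of_eq hoff inf_le_right (min_eq_right h)).trans (hy i)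

theorem dotProduct_mulVec_nonneg_of_mul_eq_zero (hoff : ∀ i j, i ≠ j → 0 ≤ M i j)
    (hx : 0 ≤ x) (hy : 0 ≤ y) (hxy : ∀ i, x i * y i = 0) : 0 ≤ x ⬝ᵥ M *ᵥ y := by
  refine Finset.sum_nonneg fun i _ => ?_
  rw [mulVec, dotProduct, Finset.mul_sum]
  refine Finset.sum_nonneg fun j _ => ?_
  rcases eq_or_ne i j with rfl | hij
  · rw [mul_left_comm, hxy, mul_zero]
  · exact mul_nonneg (hx i) (mul_nonneg (hoff i j hij) (hy j))

theorem nonneg_of_mulVec_nonpos (hoff : ∀ i j, i ≠ j → 0 ≤ M i j)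
    (hdef : ∀ z, z ≠ 0 → z ⬝ᵥ M *ᵥ z < 0) (hx : M *ᵥ x ≤ 0) : 0 ≤ x := by
  rw [← negPart_eq_zero]
  by_contra hz
  have hdisj : ∀ i, x⁻ i * x⁺ i = 0 := fun i => by
    rcases le_total (x i) 0 with h | h <;> simp [h]
  have hzx : x⁻ ⬝ᵥ M *ᵥ x ≤ 0 :=
    Finset.sum_nonpos fun i _ => mul_nonpos_of_nonneg_of_nonpos (negPart_nonneg x i) (hx i)
  have hzy : 0 ≤ x⁻ ⬝ᵥ M *ᵥ x⁺ :=
    dotProduct_mulVec_nonneg_of_mul_eq_zero hoff (negPart_nonneg x) (posPart_nonneg x) hdisj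
  have hsplit : x⁻ ⬝ᵥ M *ᵥ x = x⁻ ⬝ᵥ M *ᵥ x⁺ - x⁻ ⬝ᵥ M *ᵥ x⁻ := by
    rw [← dotProduct_sub, ← mulVec_sub, posPart_sub_negPart]
  linarith [hdef _ hz]

theorem pos_of_pos_of_mulVec_nonpos (hoff : ∀ i j, i ≠ j → 0 ≤ M i j)
    {u v : ι} (hx₀ : 0 ≤ x) (hx : M *ᵥ x ≤ 0) (hvu : 0 < M v u) (hu : 0 < x u) : 0 < x v := by
  refine (hx₀ v).lt_of_ne' fun hv : x v = 0 => (hx v).not_gt ?_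
  have hterm : ∀ j ∈ Finset.univ, 0 ≤ M v j * x j := fun j _ => by
    rcases eq_or_ne v j with rfl | hvj
    · rw [hv, mul_zero]
    · exact mul_nonneg (hoff v j hvj) (hx₀ j)
  calc 0 < M v u * x u := mul_pos hvu hu
    _ ≤ (M *ᵥ x) v := Finset.single_le_sum hterm (Finset.mem_univ u)

theorem pos_of_mulVec_nonpos (hoff : ∀ i j, i ≠ j → 0 ≤ M i j) (hsymm : M.IsSymm)
    (hconn : (SimpleGraph.fromRel fun i j => 0 < M i j).Preconnected)
    (hdef : ∀ z, z ≠ 0 → z ⬝ᵥ M *ᵥ z < 0) (hx₀ : x ≠ 0) (hx : M *ᵥ x ≤ 0) (i : ι) :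
    0 < x i := by
  have hnonneg := nonneg_of_mulVec_nonpos hoff hdef hx
  obtain ⟨u, hu⟩ := Function.ne_iff.1 hx₀
  refine hconn.forall_of_adj (p := fun i => 0 < x i) (fun a b hab ha => ?_)
    ((hnonneg u).lt_of_ne' hu) i
  obtain ⟨-, hba | hba⟩ := (SimpleGraph.fromRel_adj _ _ _).1 hab
  · exact pos_of_pos_of_mulVec_nonpos hoff hnonneg hx (hsymm.apply a b ▸ hba) ha
  · exact pos_of_pos_of_mulVec_nonpos hoff hnonneg hx hba ha

end Matrix

theorem fundamental_cycle_exists_unique {n : ℕ} (M : Matrix (Fin n) (Fin n) ℤ)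
    (hsymm : M.IsSymm)
    (hnegdef : (-(M.map (Int.cast : ℤ → ℝ))).PosDef)
    (hoff : ∀ i j, i ≠ j → 0 ≤ M i j)
    (hconn : (SimpleGraph.fromRel (fun i j => 0 < M i j)).Connected)
    (hne : ∃ x : Fin n → ℤ, x ≠ 0 ∧ ∀ i, M.mulVec x i ≤ 0) :
    (∃! Z : Fin n → ℤ, (Z ≠ 0 ∧ ∀ i, M.mulVec Z i ≤ 0) ∧
        ∀ x : Fin n → ℤ, (x ≠ 0 ∧ ∀ i, M.mulVec x i ≤ 0) → x ≤ Z → x = Z) ∧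
      (∀ Z : Fin n → ℤ, ((Z ≠ 0 ∧ ∀ i, M.mulVec Z i ≤ 0) ∧
          ∀ x : Fin n → ℤ, (x ≠ 0 ∧ ∀ i, M.mulVec x i ≤ 0) → x ≤ Z → x = Z) →
        ∀ i, 0 < Z i) := by
  set S : Set (Fin n → ℤ) := {x | x ≠ 0 ∧ ∀ i, M.mulVec x i ≤ 0}
  have hpos : ∀ x ∈ S, ∀ i, 0 < x i := fun x hx =>
    pos_of_mulVec_nonpos hoff hsymm hconn.preconnected
      (fun _ => dotProduct_mulVec_neg_of_posDef_neg_map_intCast hnegdef) hx.1 hx.2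
  have hinf : InfClosed S := fun x hx y hy => by
    obtain ⟨i, hi⟩ := Function.ne_iff.1 hx.1
    exact ⟨Function.ne_iff.2 ⟨i, (lt_min (hpos x hx i) (hpos y hy i)).ne'⟩,
      mulVec_inf_nonpos hoff hx.2 hy.2⟩
  classical
  obtain ⟨Z, hZS, hZle⟩ :=
    hinf.exists_isLeast ⟨0, fun x hx i => (hpos x hx i).le⟩ hne
  refine ⟨⟨Z, ⟨hZS, fun x hx hxZ => le_antisymm hxZ (hZle hx)⟩,
    fun Z' hZ' => (hZ'.2 Z hZS (hZle hZ'.1)).symm⟩, fun Z' hZ' => hpos Z' hZ'.1⟩
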